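/- arXiv:0802.1637 — 3 statements merged into one kernel-verified Lean document; each statement's English description precedes it below -/
import Mathlib

section
/- Define ρ(p,q) = (√p − √q)² + (√(1−p) − √(1−q))² for p, q in [0,1]. Then there exist positive constants c, C such that for all p, q in [0,1]: c·[(p−q)²/(p+q) + (p−q)²/(2−p−q)] ≤ ρ(p,q) ≤ C·[(p−q)²/(p+q) + (p−q)²/(2−p−q)] (with the convention 0/0 = 0). -/
noncomputable def rho (p q : ℝ) : ℝ :=
  (Real.sqrt p - Real.sqrt q) ^ 2 + (Real.sqrt (1 - p) - Real.sqrt (1 - q)) ^ 2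

lemma key (a b : ℝ) (ha : 0 ≤ a) (hb : 0 ≤ b) :
    (a - b) ^ 2 / (a + b) ≤ 2 * (Real.sqrt a - Real.sqrt b) ^ 2 ∧
    (Real.sqrt a - Real.sqrt b) ^ 2 ≤ (a - b) ^ 2 / (a + b) := by
  rcases eq_or_lt_of_le (by positivity : (0:ℝ) ≤ a + b) with h | h
  · have ha0 : a = 0 := by linarith
    have hb0 : b = 0 := by linarith
    simp [ha0, hb0]
  · have hsum : (Real.sqrt a + Real.sqrt b) ^ 2 = a + b + 2 * (Real.sqrt a * Real.sqrt b) := by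
      have := Real.sq_sqrt ha
      have := Real.sq_sqrt hb
      ring_nf
      nlinarith [Real.sq_sqrt ha, Real.sq_sqrt hb]
    have hid : (Real.sqrt a - Real.sqrt b) ^ 2 * (Real.sqrt a + Real.sqrt b) ^ 2
        = (a - b) ^ 2 := by
      have h1 := Real.sq_sqrt ha
      have h2 := Real.sq_sqrt hb
      nlinarith [h1, h2]
    have hab : Real.sqrt a * Real.sqrt b ≥ 0 := by positivity
    have hub : (Real.sqrt a + Real.sqrt b) ^ 2 ≤ 2 * (a + b) := by
      nlinarith [sq_nonneg (Real.sqrt a - Real.sqrt b), Real.sq_sqrt ha, Real.sq_sqrt hb]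
    have hlb : a + b ≤ (Real.sqrt a + Real.sqrt b) ^ 2 := by nlinarith
    constructor
    · rw [div_le_iff₀ h]
      nlinarith [sq_nonneg (Real.sqrt a - Real.sqrt b)]
    · rw [le_div_iff₀ h]
      nlinarith [sq_nonneg (Real.sqrt a - Real.sqrt b)]

theorem stmt1 :
    ∃ c C : ℝ, 0 < c ∧ 0 < C ∧
      ∀ p q : ℝ, p ∈ Set.Icc (0:ℝ) 1 → q ∈ Set.Icc (0:ℝ) 1 →
        c * ((p - q) ^ 2 / (p + q) + (p - q) ^ 2 / (2 - p - q)) ≤ rho p q ∧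
        rho p q ≤ C * ((p - q) ^ 2 / (p + q) + (p - q) ^ 2 / (2 - p - q)) := by
  refine ⟨1/2, 1, by norm_num, by norm_num, fun p q hp hq => ?_⟩
  obtain ⟨hp0, hp1⟩ := hp
  obtain ⟨hq0, hq1⟩ := hq
  have h1 := key p q hp0 hq0
  have h2 := key (1 - p) (1 - q) (by linarith) (by linarith)
  have e1 : (1 - p) - (1 - q) = -(p - q) := by ring
  have e2 : (1 - p) + (1 - q) = 2 - p - q := by ring
  rw [e1, e2, neg_sq] at h2
  unfold rho
  constructor
  · linarith [h1.1, h2.1]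
  · linarith [h1.2, h2.2]
end

section
/- For p, q in [0,1], the quantities (max p q) ⊓ (max (1−p) (1−q)) and (min p (1−p)) ⊔ |p − q| agree up to universal multiplicative constants: there exist c, C > 0 with c·((min p (1−p)) ⊔ |p−q|) ≤ (max p q) ⊓ (max (1−p) (1−q)) ≤ C·((min p (1−p)) ⊔ |p−q|). -/
/-! The constants `c = 1` and `C = 2` work. For the lower bound, on `[0, 1]` the distance
`|p - q|` is at most both `max p q` and `max (1 - p) (1 - q)`. For the upper bound,
`max p q ≤ p + |p - q|`, and the same under `p ↦ 1 - p`, so the min–max is at most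
`min p (1 - p) + |p - q|`. -/

section

variable {α : Type*} [Ring α] [LinearOrder α] [IsStrictOrderedRing α]

theorem abs_sub_le_min_max_max_one_sub {p q : α} (hp : p ∈ Set.Icc 0 1)
    (hq : q ∈ Set.Icc 0 1) :
    |p - q| ≤ min (max p q) (max (1 - p) (1 - q)) := by
  obtain ⟨hp0, hp1⟩ := hp
  obtain ⟨hq0, hq1⟩ := hq
  refine le_min (abs_sub_le_of_nonneg_of_le hp0 (le_max_left p q) hq0 (le_max_right p q)) ?_
  rw [← abs_sub_comm, ← sub_sub_sub_cancel_left p q 1]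
  exact abs_sub_le_of_nonneg_of_le (sub_nonneg.2 hp1) (le_max_left _ _)
    (sub_nonneg.2 hq1) (le_max_right _ _)

theorem max_min_abs_le_min_max_max_one_sub {p q : α} (hp : p ∈ Set.Icc 0 1)
    (hq : q ∈ Set.Icc 0 1) :
    max (min p (1 - p)) |p - q| ≤ min (max p q) (max (1 - p) (1 - q)) :=
  max_le (min_le_min (le_max_left _ _) (le_max_left _ _))
    (abs_sub_le_min_max_max_one_sub hp hq)

theorem max_le_add_abs_sub (p q : α) : max p q ≤ p + |p - q| :=
  max_le (le_add_of_nonneg_right (abs_nonneg _))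
    (sub_le_iff_le_add'.1 (abs_sub_comm q p ▸ le_abs_self (q - p)))

theorem min_max_max_one_sub_le_two_mul (p q : α) :
    min (max p q) (max (1 - p) (1 - q)) ≤ 2 * max (min p (1 - p)) |p - q| :=
  calc min (max p q) (max (1 - p) (1 - q))
      ≤ min (p + |p - q|) (1 - p + |p - q|) := by
        refine min_le_min (max_le_add_abs_sub p q) ?_
        simpa only [abs_sub_comm q p, sub_sub_sub_cancel_left] using
          max_le_add_abs_sub (1 - p) (1 - q)
    _ = min p (1 - p) + |p - q| := min_add_add_right _ _ _
    _ ≤ 2 * max (min p (1 - p)) |p - q| := by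
        rw [two_mul]
        exact add_le_add (le_max_left _ _) (le_max_right _ _)

end

theorem stmt2 :
    ∃ c C : ℝ, 0 < c ∧ 0 < C ∧
      ∀ p q : ℝ, p ∈ Set.Icc (0:ℝ) 1 → q ∈ Set.Icc (0:ℝ) 1 →
        c * (max (min p (1 - p)) |p - q|) ≤ min (max p q) (max (1 - p) (1 - q)) ∧
        min (max p q) (max (1 - p) (1 - q)) ≤ C * (max (min p (1 - p)) |p - q|) :=
  ⟨1, 2, one_pos, two_pos, fun _ _ hp hq =>
    ⟨(one_mul _).trans_le (max_min_abs_le_min_max_max_one_sub hp hq),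
      min_max_max_one_sub_le_two_mul _ _⟩⟩
end

section
/- Conversely to the sufficiency direction: if X_n = (I_{n,i})_i and X_n' = (I_{n,i}')_i are vectors of independent Bernoulli variables with parameters p_{n,i}, p_{n,i}' and d_TV(X_n, X_n') → 0, then Σ_i ρ(p_{n,i}, p_{n,i}') → 0, where ρ(p,q) = (√p − √q)² + (√(1−p) − √(1−q))². -/
/-!
The Hellinger integral `H(P, Q) = ∑ √(P x Q x)` dominates `1 - d_TV(P, Q) = ∑ min (P x) (Q x)`,
because `min a b ≤ √(a b)`. For product laws the Hellinger integral factorizes into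
`∏ i (1 - ρ(pᵢ, p'ᵢ) / 2) ≤ exp (-∑ i ρ(pᵢ, p'ᵢ) / 2)`, so `∑ i ρ(pᵢ, p'ᵢ) ≤ -2 log (1 - d_TV) → 0`.
-/

open Filter Finset Real

noncomputable def bmass (p : ℝ) (b : Bool) : ℝ := if b then p else 1 - p

noncomputable def hellingerIntegral {α : Type*} [Fintype α] (P Q : α → ℝ) : ℝ :=
  ∑ x, √(P x * Q x)

section FiniteLaws

variable {α : Type*} [Fintype α] {P Q : α → ℝ}

lemma min_le_sqrt_mul {a b : ℝ} (ha : 0 ≤ a) (hb : 0 ≤ b) : min a b ≤ √(a * b) :=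
  (Real.le_sqrt (le_min ha hb) (mul_nonneg ha hb)).2 <|
    pow_two (min a b) ▸ mul_le_mul (min_le_left a b) (min_le_right a b) (le_min ha hb) ha

lemma sum_min_eq_one_sub_half_sum_abs_sub (hP : ∑ x, P x = 1) (hQ : ∑ x, Q x = 1) :
    ∑ x, min (P x) (Q x) = 1 - 1 / 2 * ∑ x, |P x - Q x| := by
  have hmin (a b : ℝ) : min a b = (a + b - |a - b|) / 2 := by
    linarith [min_add_max a b, max_sub_min_eq_abs a b, abs_sub_comm a b]
  simp only [hmin, ← Finset.sum_div, Finset.sum_sub_distrib, Finset.sum_add_distrib, hP, hQ]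
  ring

lemma one_sub_half_sum_abs_sub_le_hellingerIntegral (hP₀ : ∀ x, 0 ≤ P x) (hQ₀ : ∀ x, 0 ≤ Q x)
    (hP : ∑ x, P x = 1) (hQ : ∑ x, Q x = 1) :
    1 - 1 / 2 * ∑ x, |P x - Q x| ≤ hellingerIntegral P Q := by
  rw [← sum_min_eq_one_sub_half_sum_abs_sub hP hQ]
  exact Finset.sum_le_sum fun x _ => min_le_sqrt_mul (hP₀ x) (hQ₀ x)

end FiniteLaws

section ProductLaws

variable {ι : Type*} [Fintype ι] [DecidableEq ι] {β : ι → Type*} [∀ i, Fintype (β i)]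

lemma sum_prod_eq_one {P : ∀ i, β i → ℝ} (hP : ∀ i, ∑ b, P i b = 1) :
    ∑ x : (i : ι) → β i, ∏ i, P i (x i) = 1 := by
  rw [← Fintype.prod_sum]
  simp [hP]

lemma hellingerIntegral_pi {P Q : ∀ i, β i → ℝ} (hP₀ : ∀ i b, 0 ≤ P i b) (hQ₀ : ∀ i b, 0 ≤ Q i b) :
    hellingerIntegral (fun x : (i : ι) → β i => ∏ i, P i (x i)) (fun x => ∏ i, Q i (x i)) =
      ∏ i, hellingerIntegral (P i) (Q i) := by
  simp only [hellingerIntegral, Fintype.prod_sum, ← Finset.prod_mul_distrib]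
  refine Finset.sum_congr rfl fun x _ => Real.sqrt_prod _ fun i _ => ?_
  exact mul_nonneg (hP₀ i (x i)) (hQ₀ i (x i))

end ProductLaws

lemma bmass_nonneg {p : ℝ} (hp : p ∈ Set.Icc (0 : ℝ) 1) (b : Bool) : 0 ≤ bmass p b := by
  cases b
  · exact sub_nonneg.2 hp.2
  · exact hp.1

lemma sum_bmass (p : ℝ) : ∑ b, bmass p b = 1 := by
  simp [bmass]

lemma hellingerIntegral_bmass {p q : ℝ} (hp : p ∈ Set.Icc (0 : ℝ) 1) (hq : q ∈ Set.Icc (0 : ℝ) 1) :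
    hellingerIntegral (bmass p) (bmass q) = 1 - rho p q / 2 := by
  have hp' : 0 ≤ 1 - p := sub_nonneg.2 hp.2
  have hq' : 0 ≤ 1 - q := sub_nonneg.2 hq.2
  simp only [hellingerIntegral, bmass, Fintype.sum_bool, if_true, Bool.false_eq_true, if_false,
    rho, Real.sqrt_mul hp.1, Real.sqrt_mul hp']
  nlinarith [Real.sq_sqrt hp.1, Real.sq_sqrt hq.1, Real.sq_sqrt hp', Real.sq_sqrt hq']

lemma rho_nonneg (p q : ℝ) : 0 ≤ rho p q := by
  unfold rho
  positivity

lemma rho_le_two {p q : ℝ} (hp : p ∈ Set.Icc (0 : ℝ) 1) (hq : q ∈ Set.Icc (0 : ℝ) 1) :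
    rho p q ≤ 2 := by
  have hH := hellingerIntegral_bmass hp hq
  have hH₀ : 0 ≤ hellingerIntegral (bmass p) (bmass q) :=
    Finset.sum_nonneg fun _ _ => Real.sqrt_nonneg _
  linarith

lemma prod_one_sub_le_exp_neg_sum {ι : Type*} (s : Finset ι) {a : ι → ℝ}
    (ha : ∀ i ∈ s, a i ≤ 1) : ∏ i ∈ s, (1 - a i) ≤ exp (-∑ i ∈ s, a i) := by
  rw [← Finset.sum_neg_distrib, Real.exp_sum]
  exact Finset.prod_le_prod (fun i hi => sub_nonneg.2 (ha i hi))
    fun i _ => Real.one_sub_le_exp_neg (a i)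

lemma tendsto_zero_of_one_sub_le_exp_neg {γ : Type*} {l : Filter γ} {d S : γ → ℝ}
    (hd : Tendsto d l (nhds 0)) (hS₀ : ∀ n, 0 ≤ S n) (hS : ∀ n, 1 - d n ≤ exp (-S n)) :
    Tendsto S l (nhds 0) := by
  have hlog : Tendsto (fun n => -log (1 - d n)) l (nhds 0) := by
    simpa using ((continuousAt_log one_ne_zero).tendsto.comp (by simpa using hd.const_sub 1)).neg
  have hpos : ∀ᶠ n in l, 0 < 1 - d n := by
    simpa using hd.eventually (gt_mem_nhds one_pos)
  refine squeeze_zero' (.of_forall hS₀) (hpos.mono fun n hn => ?_) hlog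
  exact le_neg_of_le_neg ((log_le_iff_le_exp hn).2 (hS n))

theorem stmt12_general (N : ℕ → ℕ)
    (p p' : ∀ n, Fin (N n) → ℝ)
    (hp : ∀ n i, p n i ∈ Set.Icc (0:ℝ) 1) (hp' : ∀ n i, p' n i ∈ Set.Icc (0:ℝ) 1)
    (h : Tendsto (fun n => (1 / 2) * ∑ x : Fin (N n) → Bool,
        |(∏ i, bmass (p n i) (x i)) - ∏ i, bmass (p' n i) (x i)|) atTop (nhds 0)) :
    Tendsto (fun n => ∑ i, rho (p n i) (p' n i)) atTop (nhds 0) := by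
  have hbound : ∀ n, 1 - (1 / 2) * ∑ x : Fin (N n) → Bool,
      |(∏ i, bmass (p n i) (x i)) - ∏ i, bmass (p' n i) (x i)| ≤
        exp (-((∑ i, rho (p n i) (p' n i)) / 2)) := fun n => calc
    _ ≤ hellingerIntegral (fun x : Fin (N n) → Bool => ∏ i, bmass (p n i) (x i))
          (fun x => ∏ i, bmass (p' n i) (x i)) :=
      one_sub_half_sum_abs_sub_le_hellingerIntegral
        (fun _ => Finset.prod_nonneg fun i _ => bmass_nonneg (hp n i) _)
        (fun _ => Finset.prod_nonneg fun i _ => bmass_nonneg (hp' n i) _)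
        (sum_prod_eq_one fun i => sum_bmass _) (sum_prod_eq_one fun i => sum_bmass _)
    _ = ∏ i, (1 - rho (p n i) (p' n i) / 2) := by
      rw [hellingerIntegral_pi (fun i => bmass_nonneg (hp n i)) (fun i => bmass_nonneg (hp' n i))]
      exact Finset.prod_congr rfl fun i _ => hellingerIntegral_bmass (hp n i) (hp' n i)
    _ ≤ exp (-((∑ i, rho (p n i) (p' n i)) / 2)) := by
      rw [Finset.sum_div]
      exact prod_one_sub_le_exp_neg_sum _ fun i _ =>
        (div_le_one two_pos).2 (rho_le_two (hp n i) (hp' n i))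
  have hrho₀ : ∀ n, 0 ≤ (∑ i, rho (p n i) (p' n i)) / 2 := fun n =>
    div_nonneg (Finset.sum_nonneg fun i _ => rho_nonneg _ _) zero_le_two
  simpa [mul_div_cancel₀] using (tendsto_zero_of_one_sub_le_exp_neg h hrho₀ hbound).const_mul 2

theorem stmt12 (N : ℕ → ℕ) (hN : ∀ n, 1 ≤ N n)
    (p p' : ∀ n, Fin (N n) → ℝ)
    (hp : ∀ n i, p n i ∈ Set.Icc (0:ℝ) 1) (hp' : ∀ n i, p' n i ∈ Set.Icc (0:ℝ) 1)
    (h : Tendsto (fun n => (1 / 2) * ∑ x : Fin (N n) → Bool,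
        |(∏ i, bmass (p n i) (x i)) - ∏ i, bmass (p' n i) (x i)|) atTop (nhds 0)) :
    Tendsto (fun n => ∑ i, rho (p n i) (p' n i)) atTop (nhds 0) :=
  stmt12_general N p p' hp hp' h
end
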